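/- Let P ∈ F_2[X_1,...,X_m] be a polynomial with degree at most 1 in each variable, let a ∈ F_2^m, and let s ≥ 1. Then P vanishes at a with multiplicity at least s if and only if P(b) = 0 for every b ∈ F_2^m whose Hamming distance from a is at most s − 1. -/

import Mathlib

/-- The Hasse derivative of a multivariate polynomial `P` with respect to the index
vector `i : Fin m → ℕ`: the coefficient of `Z^i` in `P(X + Z)`. -/
noncomputable def mvHasseDeriv {F : Type*} [CommSemiring F] {m : ℕ}
    (i : Fin m → ℕ) (P : MvPolynomial (Fin m) F) : MvPolynomial (Fin m) F :=
  MvPolynomial.coeff (Finsupp.equivFunOnFinite.symm i)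
    (MvPolynomial.eval₂ (MvPolynomial.C.comp MvPolynomial.C)
      (fun k => MvPolynomial.C (MvPolynomial.X k) + MvPolynomial.X k) P)

/-- The multiplicity of `P` at a point `a`: the largest `M` (possibly `⊤`) such that
all Hasse derivatives of `P` of weight `< M` vanish at `a`. -/
noncomputable def mvMult {F : Type*} [CommSemiring F] {m : ℕ}
    (P : MvPolynomial (Fin m) F) (a : Fin m → F) : ℕ∞ :=
  sSup {M : ℕ∞ | ∀ i : Fin m → ℕ, ((∑ k, i k : ℕ) : ℕ∞) < M →
    MvPolynomial.eval a (mvHasseDeriv i P) = 0}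

/-!
The Taylor expansion `P(a + e) = ∑_d (D^d P)(a) e^d` identifies the Hasse derivatives of `P`
at `a` with the coefficients of the shifted polynomial `T = P(a + X)`, which is again
multilinear. For multilinear `T` the value `T(1_U)` is the sum of the coefficients of the
monomials `X^S` with `S ⊆ U`; this system is unitriangular for inclusion, so the coefficients of
degree `< s` all vanish iff `T` vanishes at every vector with fewer than `s` nonzero entries.
Shifted back by `a`, these vectors form the Hamming ball of radius `s - 1` around `a`.
-/

open MvPolynomial Finset

section Taylor

variable {R σ : Type*} [CommSemiring R]

noncomputable def mvTaylor (a : σ → R) : MvPolynomial σ R →ₐ[R] MvPolynomial σ R :=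
  aeval fun k => C (a k) + X k

theorem eval_mvTaylor (a e : σ → R) (P : MvPolynomial σ R) :
    eval e (mvTaylor a P) = eval (a + e) P := by
  induction P using MvPolynomial.induction_on <;> simp_all [mvTaylor]

theorem degreeOf_mvTaylor_monomial_le (a : σ → R) (u : σ →₀ ℕ) (c : R) (k : σ) :
    (mvTaylor a (monomial u c)).degreeOf k ≤ u k := by
  classical
  have hX : ∀ j, (C (a j) + X j : MvPolynomial σ R).degreeOf k ≤ if j = k then 1 else 0 := by
    intro j
    refine (degreeOf_add_le _ _ _).trans (max_le (by simp [degreeOf_C]) ?_)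
    split_ifs with hj
    · subst hj
      exact degreeOf_le_iff.mpr fun v hv => by
        rw [Finset.mem_singleton.mp (support_monomial_subset hv)]; simp
    · exact (degreeOf_X_of_ne (Ne.symm hj)).le
  rw [mvTaylor, aeval_monomial, algebraMap_eq, Finsupp.prod]
  refine (degreeOf_C_mul_le _ _ _).trans <| (degreeOf_prod_le _ _ _).trans ?_
  refine (sum_le_sum fun j _ =>
    (degreeOf_pow_le _ _ _).trans (Nat.mul_le_mul_left (u j) (hX j))).trans ?_
  simp only [mul_ite, mul_one, mul_zero, sum_ite_eq', Finsupp.mem_support_iff]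
  split_ifs <;> omega

theorem degreeOf_mvTaylor_le (a : σ → R) (P : MvPolynomial σ R) (k : σ) :
    (mvTaylor a P).degreeOf k ≤ P.degreeOf k := by
  conv_lhs => rw [P.as_sum, map_sum]
  exact (degreeOf_sum_le _ _ _).trans <| Finset.sup_le fun u hu =>
    (degreeOf_mvTaylor_monomial_le a u _ k).trans (monomial_le_degreeOf k hu)

end Taylor

section Multiplicity

variable {R : Type*} [CommSemiring R] {m : ℕ}

theorem le_mvMult_iff {P : MvPolynomial (Fin m) R} {a : Fin m → R} {M : ℕ∞} :
    M ≤ mvMult P a ↔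
      ∀ i : Fin m → ℕ, ((∑ k, i k : ℕ) : ℕ∞) < M → eval a (mvHasseDeriv i P) = 0 :=
  ⟨fun h i hi => by
    obtain ⟨M', hM', hlt⟩ := lt_sSup_iff.mp (hi.trans_le h)
    exact hM' i hlt, fun h => le_sSup h⟩

theorem eval_mvHasseDeriv (a : Fin m → R) (i : Fin m → ℕ) (P : MvPolynomial (Fin m) R) :
    eval a (mvHasseDeriv i P) = coeff (Finsupp.equivFunOnFinite.symm i) (mvTaylor a P) := by
  rw [mvHasseDeriv, ← coeff_map]
  congr 1
  induction P using MvPolynomial.induction_on <;> simp_all [mvTaylor]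

theorem le_mvMult_iff_coeff_mvTaylor {P : MvPolynomial (Fin m) R} {a : Fin m → R} {M : ℕ∞} :
    M ≤ mvMult P a ↔ ∀ d : Fin m →₀ ℕ, (d.degree : ℕ∞) < M → coeff d (mvTaylor a P) = 0 := by
  simp_rw [le_mvMult_iff, eval_mvHasseDeriv, Finsupp.degree_eq_sum]
  exact Finsupp.equivFunOnFinite.symm.forall_congr_right
    (q := fun d : Fin m →₀ ℕ => ((∑ k, d k : ℕ) : ℕ∞) < M → coeff d (mvTaylor a P) = 0)

end Multiplicity

theorem Finsupp.eq_of_support_eq_of_le_one {σ : Type*} {d d' : σ →₀ ℕ} (h : ∀ k, d k ≤ 1)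
    (h' : ∀ k, d' k ≤ 1) (hs : d.support = d'.support) : d = d' := by
  ext k
  have hk : d k ≠ 0 ↔ d' k ≠ 0 := by simp only [← Finsupp.mem_support_iff, hs]
  have := h k
  have := h' k
  omega

namespace MvPolynomial

variable {R σ : Type*} [CommSemiring R] {T : MvPolynomial σ R}

theorem le_one_of_mem_support (hT : ∀ k, T.degreeOf k ≤ 1) {d : σ →₀ ℕ} (hd : d ∈ T.support)
    (k : σ) : d k ≤ 1 :=
  (monomial_le_degreeOf k hd).trans (hT k)

theorem degree_eq_card_support (hT : ∀ k, T.degreeOf k ≤ 1) {d : σ →₀ ℕ}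
    (hd : d ∈ T.support) : d.degree = #d.support := by
  rw [Finsupp.degree_apply, card_eq_sum_ones]
  refine sum_congr rfl fun k hk => ?_
  have := le_one_of_mem_support hT hd k
  have := Finsupp.mem_support_iff.mp hk
  omega

theorem eval_eq_zero_of_coeff_eq_zero {S : Finset σ} {e : σ → R} (he : ∀ k ∉ S, e k = 0)
    (h : ∀ d : σ →₀ ℕ, d.support ⊆ S → coeff d T = 0) : eval e T = 0 := by
  rw [eval_eq]
  refine sum_eq_zero fun d _ => ?_
  by_cases hd : d.support ⊆ S
  · rw [h d hd, zero_mul]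
  · obtain ⟨k, hk, hkS⟩ := not_subset.mp hd
    rw [prod_eq_zero hk (by rw [he k hkS, zero_pow (Finsupp.mem_support_iff.mp hk)]), mul_zero]

theorem eval_indicator_eq_sum [DecidableEq σ] (S : Finset σ) :
    eval (fun k => if k ∈ S then 1 else 0) T
      = ∑ d ∈ T.support with d.support ⊆ S, coeff d T := by
  rw [eval_eq, sum_filter]
  refine sum_congr rfl fun d _ => ?_
  split_ifs with hd
  · rw [prod_eq_one fun k hk => by rw [if_pos (hd hk), one_pow], mul_one]
  · obtain ⟨k, hk, hkS⟩ := not_subset.mp hd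
    rw [prod_eq_zero hk (by rw [if_neg hkS, zero_pow (Finsupp.mem_support_iff.mp hk)]), mul_zero]

theorem coeff_eq_zero_of_eval_indicator_eq_zero [DecidableEq σ] (hT : ∀ k, T.degreeOf k ≤ 1)
    (S : Finset σ) (h : ∀ U ⊆ S, eval (fun k => if k ∈ U then 1 else 0) T = 0)
    (d : σ →₀ ℕ) (hd : d.support ⊆ S) : coeff d T = 0 := by
  induction S using Finset.strongInduction generalizing d with
  | H S ih =>
  have below : ∀ d' : σ →₀ ℕ, d'.support ⊂ S → coeff d' T = 0 := fun d' hd' =>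
    ih _ hd' (fun U hU => h U (hU.trans hd'.subset)) d' (Subset.refl _)
  obtain hlt | rfl := hd.ssubset_or_eq
  · exact below d hlt
  -- In `T(1_{supp d})` every coefficient other than `coeff d T` vanishes, by induction or
  -- because a multilinear exponent is determined by its support.
  by_contra hdT
  have hsum := h d.support (Subset.refl _)
  rw [eval_indicator_eq_sum, sum_eq_single_of_mem d
    (mem_filter.mpr ⟨mem_support_iff.mpr hdT, Subset.refl _⟩)] at hsum
  · exact hdT hsum
  intro d' hd' hne
  obtain ⟨hd'T, hd'S⟩ := mem_filter.mp hd'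
  refine below d' (hd'S.ssubset_of_ne fun hs => hne ?_)
  exact Finsupp.eq_of_support_eq_of_le_one (le_one_of_mem_support hT hd'T)
    (le_one_of_mem_support hT (mem_support_iff.mpr hdT)) hs

theorem forall_degree_lt_coeff_eq_zero_iff [DecidableEq σ] (hT : ∀ k, T.degreeOf k ≤ 1) (s : ℕ) :
    (∀ d : σ →₀ ℕ, d.degree < s → coeff d T = 0) ↔
      ∀ S : Finset σ, #S < s → ∀ e : σ → R, (∀ k ∉ S, e k = 0) → eval e T = 0 := by
  constructor
  · intro h S hS e he
    refine eval_eq_zero_of_coeff_eq_zero he fun d hd => ?_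
    by_contra hdT
    refine hdT (h d ?_)
    rw [degree_eq_card_support hT (mem_support_iff.mpr hdT)]
    exact (card_le_card hd).trans_lt hS
  · intro h d hd
    by_contra hdT
    rw [degree_eq_card_support hT (mem_support_iff.mpr hdT)] at hd
    refine hdT (coeff_eq_zero_of_eval_indicator_eq_zero hT d.support
      (fun S hS => h S ((card_le_card hS).trans_lt hd) _ fun k hk => if_neg hk) d (Subset.refl _))

end MvPolynomial

/-- **Multiplicity versus Hamming balls for multilinear polynomials over `F_2`.**
If `P ∈ F_2[X_1,…,X_m]` has degree at most `1` in each variable, `a ∈ F_2^m` and `s ≥ 1`,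
then `P` vanishes at `a` with multiplicity at least `s` iff `P(b) = 0` for every `b ∈ F_2^m`
at Hamming distance at most `s − 1` from `a`. -/
theorem multilinear_mult_iff_hamming_ball {m : ℕ} (P : MvPolynomial (Fin m) (ZMod 2))
    (hdeg : ∀ k, P.degreeOf k ≤ 1) (a : Fin m → ZMod 2) (s : ℕ) (hs : 1 ≤ s) :
    (s : ℕ∞) ≤ mvMult P a ↔
      ∀ b : Fin m → ZMod 2, hammingDist a b ≤ s - 1 → MvPolynomial.eval b P = 0 := by
  classical
  have hT : ∀ k, (mvTaylor a P).degreeOf k ≤ 1 :=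
    fun k => (degreeOf_mvTaylor_le a P k).trans (hdeg k)
  simp only [le_mvMult_iff_coeff_mvTaylor, Nat.cast_lt, forall_degree_lt_coeff_eq_zero_iff hT]
  constructor
  · intro h b hb
    rw [← add_sub_cancel a b, ← eval_mvTaylor]
    exact h {k | a k ≠ b k} (by unfold hammingDist at hb; omega) (b - a) fun k hk => by
      simpa [sub_eq_zero, eq_comm] using hk
  · intro h S hS e he
    rw [eval_mvTaylor]
    refine h (a + e) ((card_le_card fun k hk => ?_).trans (Nat.le_sub_one_of_lt hS))
    by_contra hkS
    simp [he k hkS] at hk
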